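/- The Al-Salam–Carlitz II polynomial P_n(x) = (-c)^n q^(-n(n-1)/2) ₂φ₀(q^(-n), cx; —; q, d q^n/c) is symmetric under interchange of c and d: d^n V_n^{(c/d)}(cx; q) = c^n V_n^{(d/c)}(dx; q), where V_n^{(a)}(z;q) = (-a)^n q^(-n(n-1)/2) ₂φ₀(q^(-n), z; —; q, q^n/a). -/

import Mathlib

open scoped BigOperators

/-- q-Pochhammer infinite product `(a;q)_∞`. -/
noncomputable def qp (q a : ℂ) : ℂ := ∏' n : ℕ, (1 - a * q ^ n)

/-- q-Pochhammer `(a;q)_k`. -/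
noncomputable def qpn (q a : ℂ) (k : ℕ) : ℂ := ∏ j ∈ Finset.range k, (1 - a * q ^ j)

/-- theta function `θ(x;q) = (x;q)_∞ (q/x;q)_∞`. -/
noncomputable def theta (q x : ℂ) : ℂ := qp q x * qp q (q / x)

/-- the `₁φ₁(a;b;q,z)` series. -/
noncomputable def phi11 (q a b z : ℂ) : ℂ :=
  ∑' n : ℕ, qpn q a n / (qpn q q n * qpn q b n) * (-1) ^ n * q ^ (n * (n - 1) / 2) * z ^ n

/-- the terminating `₂φ₀(q^(-n),B;—;q,z)` series (Gasper–Rahman convention). -/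
noncomputable def phi20 (q : ℂ) (n : ℕ) (B z : ℂ) : ℂ :=
  ∑ k ∈ Finset.range (n + 1),
    qpn q ((q ^ n)⁻¹) k * qpn q B k / qpn q q k * (-1) ^ k * (q ^ (k * (k - 1) / 2))⁻¹ * z ^ k

/-- Al-Salam–Carlitz II polynomial `V_n^{(a)}(z;q)`. -/
noncomputable def ASCII (q : ℂ) (n : ℕ) (a z : ℂ) : ℂ :=
  (-a) ^ n * ((q ^ (n * (n - 1) / 2))⁻¹) * phi20 q n z (q ^ n / a)

/-!
Since `(q^{-n};q)_k (-q^n)^k = q^{k(k-1)/2} (q;q)_n / (q;q)_{n-k}`, the `₂φ₀` series is a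
`q`-binomial sum, and `d^n V_n^{(c/d)}(cx;q) = (-1)^n q^{-n(n-1)/2} S(c, d)` with
`S(c, d) = ∑ₖ [n, k]_q (cx;q)_k c^{n-k} d^k`. Expanding `(cx;q)_k` by Cauchy's `q`-binomial
theorem and using `[n, j+m]_q [j+m, j]_q = [n, j]_q [n-j, m]_q` gives
`S(c, d) = ∑ⱼ [n, j]_q q^{j(j-1)/2} (-xcd)^j h_{n-j}(c, d)`, where `h_m` is the homogeneous
Rogers–Szegő polynomial; `h_m` is symmetric in `c, d` because `[m, i]_q = [m, m-i]_q`.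
-/

open Finset

section QPochhammer

variable (q : ℂ)

@[simp]
lemma qpn_zero (a : ℂ) : qpn q a 0 = 1 := prod_range_zero _

lemma qpn_succ (a : ℂ) (k : ℕ) : qpn q a (k + 1) = qpn q a k * (1 - a * q ^ k) :=
  prod_range_succ _ _

lemma qpn_self_ne_zero {q : ℂ} (hq : ‖q‖ < 1) (k : ℕ) : qpn q q k ≠ 0 := by
  refine prod_ne_zero_iff.2 fun j _ => sub_ne_zero.2 fun h => ?_
  have : ‖q * q ^ j‖ < 1 := by
    rw [← pow_succ', norm_pow]
    exact pow_lt_one₀ (norm_nonneg q) hq j.succ_ne_zero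
  exact this.ne (by rw [← h, norm_one])

lemma prod_one_sub_pow_mul_qpn {k n : ℕ} (h : k ≤ n) :
    (∏ j ∈ range k, (1 - q ^ (n - j))) * qpn q q (n - k) = qpn q q n := by
  induction k with
  | zero => simp
  | succ k ih =>
    obtain ⟨m, hm⟩ : ∃ m, n - k = m + 1 := ⟨n - k - 1, by omega⟩
    rw [← ih (by omega), hm, qpn_succ, prod_range_succ, show n - (k + 1) = m by omega,
      ← pow_succ', ← hm]
    ring

/-- Each factor `1 - q^{j-n}` of `(q^{-n};q)_k` is `-q^{-n} q^j (1 - q^{n-j})`. -/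
lemma qpn_inv_pow_mul {q : ℂ} (hq : q ≠ 0) {k n : ℕ} (h : k ≤ n) :
    qpn q (q ^ n)⁻¹ k * (-q ^ n) ^ k * qpn q q (n - k) = q ^ (k * (k - 1) / 2) * qpn q q n := by
  have hfactor :
      ∀ j ∈ range k, (1 - (q ^ n)⁻¹ * q ^ j) * -q ^ n = q ^ j * (1 - q ^ (n - j)) := by
    intro j hj
    rw [← pow_sub_mul_pow q (show j ≤ n by have := mem_range.1 hj; omega)]
    field_simp
    ring
  rw [qpn, show (-q ^ n) ^ k = ∏ _j ∈ range k, -q ^ n by simp, ← prod_mul_distrib,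
    prod_congr rfl hfactor, prod_mul_distrib, prod_pow_eq_pow_sum, sum_range_id, mul_assoc,
    prod_one_sub_pow_mul_qpn q h]

end QPochhammer

section GaussianBinomial

variable (q : ℂ)

noncomputable def qBinom (n k : ℕ) : ℂ :=
  if k ≤ n then qpn q q n / (qpn q q k * qpn q q (n - k)) else 0

/-- The homogeneous Rogers–Szegő polynomial. -/
noncomputable def rogersSzego (m : ℕ) (c d : ℂ) : ℂ :=
  ∑ i ∈ range (m + 1), qBinom q m i * c ^ (m - i) * d ^ i

variable {q}

lemma qBinom_of_lt {n k : ℕ} (h : n < k) : qBinom q n k = 0 := if_neg (by omega)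

lemma qBinom_symm {n k : ℕ} (h : k ≤ n) : qBinom q n (n - k) = qBinom q n k := by
  rw [qBinom, qBinom, if_pos (Nat.sub_le n k), if_pos h, Nat.sub_sub_self h, mul_comm]

lemma rogersSzego_comm (m : ℕ) (c d : ℂ) : rogersSzego q m c d = rogersSzego q m d c := by
  rw [rogersSzego, ← sum_range_reflect]
  refine sum_congr rfl fun i hi => ?_
  have him : i ≤ m := Nat.lt_succ_iff.1 (mem_range.1 hi)
  rw [Nat.add_sub_cancel, Nat.sub_sub_self him, qBinom_symm him]
  ring

variable (hq : ∀ k, qpn q q k ≠ 0)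
include hq

lemma qBinom_zero_right (n : ℕ) : qBinom q n 0 = 1 := by
  rw [qBinom, if_pos n.zero_le, qpn_zero, one_mul, Nat.sub_zero, div_self (hq n)]

lemma qBinom_self (n : ℕ) : qBinom q n n = 1 := by
  rw [qBinom, if_pos le_rfl, Nat.sub_self, qpn_zero, mul_one, div_self (hq n)]

lemma qBinom_succ_succ (n k : ℕ) :
    qBinom q (n + 1) (k + 1) = qBinom q n (k + 1) + q ^ (n - k) * qBinom q n k := by
  rcases lt_trichotomy k n with hkn | rfl | hnk
  · obtain ⟨m, rfl⟩ : ∃ m, n = k + 1 + m := ⟨n - (k + 1), by omega⟩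
    have hk := qpn_succ q q k
    have hm := qpn_succ q q m
    have hu : 1 - q * q ^ k ≠ 0 := right_ne_zero_of_mul (hk ▸ hq (k + 1))
    have hv : 1 - q * q ^ m ≠ 0 := right_ne_zero_of_mul (hm ▸ hq (m + 1))
    have := hq k; have := hq m; have := hq (k + 1 + m)
    simp only [qBinom, if_pos (show k + 1 ≤ k + 1 + m + 1 by omega),
      if_pos (show k + 1 ≤ k + 1 + m by omega), if_pos (show k ≤ k + 1 + m by omega),
      show k + 1 + m + 1 - (k + 1) = m + 1 by omega, show k + 1 + m - (k + 1) = m by omega,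
      show k + 1 + m - k = m + 1 by omega]
    rw [hk, hm, qpn_succ q q (k + 1 + m)]
    field_simp
    ring
  · rw [qBinom_of_lt (Nat.lt_succ_self k), Nat.sub_self, pow_zero, one_mul, zero_add,
      qBinom_self hq, qBinom_self hq]
  · rw [qBinom_of_lt (by omega), qBinom_of_lt (by omega), qBinom_of_lt hnk, mul_zero, add_zero]

lemma qBinom_mul_qBinom {n j m : ℕ} (h : j + m ≤ n) :
    qBinom q n (j + m) * qBinom q (j + m) j = qBinom q n j * qBinom q (n - j) m := by
  obtain ⟨t, rfl⟩ : ∃ t, n = j + m + t := ⟨n - (j + m), by omega⟩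
  have := hq (j + m); have := hq j; have := hq m; have := hq t; have := hq (m + t)
  simp only [qBinom, if_pos h, if_pos (show j ≤ j + m by omega),
    if_pos (show j ≤ j + m + t by omega), if_pos (Nat.le_add_right m t),
    show j + m + t - (j + m) = t by omega, show j + m - j = m by omega,
    show j + m + t - j = m + t by omega, show m + t - m = t by omega]
  field_simp

/-- Cauchy's `q`-binomial theorem. -/
lemma qpn_eq_sum_qBinom (b : ℂ) (k : ℕ) :
    qpn q b k = ∑ j ∈ range (k + 1), qBinom q k j * q ^ (j * (j - 1) / 2) * (-b) ^ j := by
  induction k with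
  | zero => simp [qBinom_zero_right hq]
  | succ k ih =>
    set f : ℕ → ℂ := fun j => qBinom q k j * q ^ (j * (j - 1) / 2) * (-b) ^ j
    have hpascal : ∀ i ∈ range (k + 1),
        qBinom q (k + 1) (i + 1) * q ^ ((i + 1) * (i + 1 - 1) / 2) * (-b) ^ (i + 1)
          = f (i + 1) + -b * q ^ k * f i := by
      intro i hi
      have hexp : k - i + (i + 1) * (i + 1 - 1) / 2 = i * (i - 1) / 2 + k := by
        rw [Nat.triangle_succ]; have := mem_range.1 hi; omega
      have hpow :
          q ^ (k - i) * q ^ ((i + 1) * (i + 1 - 1) / 2) = q ^ (i * (i - 1) / 2) * q ^ k := by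
        rw [← pow_add, ← pow_add, hexp]
      rw [qBinom_succ_succ hq]
      linear_combination (qBinom q k i * (-b) ^ (i + 1)) * hpow
    have hshift : ∑ i ∈ range (k + 1), f (i + 1) + f 0 = qpn q b k := by
      rw [← sum_range_succ', sum_range_succ, ih]
      simp [f, qBinom_of_lt (Nat.lt_succ_self k)]
    have hf0 : f 0 = 1 := by simp [f, qBinom_zero_right hq]
    rw [sum_range_succ', sum_congr rfl hpascal, sum_add_distrib, ← mul_sum, ← ih, qpn_succ,
      ← hshift, hf0, qBinom_zero_right hq, zero_mul, Nat.zero_div, pow_zero, pow_zero]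
    ring

lemma sum_qBinom_mul_qpn_eq (n : ℕ) (x c d : ℂ) :
    ∑ k ∈ range (n + 1), qBinom q n k * qpn q (c * x) k * c ^ (n - k) * d ^ k
      = ∑ j ∈ range (n + 1), qBinom q n j * q ^ (j * (j - 1) / 2) * (-(x * (c * d))) ^ j
          * rogersSzego q (n - j) c d := by
  simp only [qpn_eq_sum_qBinom hq, mul_sum, sum_mul, range_eq_Ico]
  rw [← sum_Ico_Ico_comm]
  refine sum_congr rfl fun j hj => ?_
  have hjn : j ≤ n := Nat.lt_succ_iff.1 (mem_Ico.1 hj).2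
  rw [sum_Ico_eq_sum_range, rogersSzego, show n + 1 - j = n - j + 1 by omega, mul_sum]
  refine sum_congr rfl fun m hm => ?_
  have hjm : j + m ≤ n := by have := mem_range.1 hm; omega
  rw [Nat.sub_sub]
  linear_combination (q ^ (j * (j - 1) / 2) * (-(c * x)) ^ j * c ^ (n - (j + m)) * d ^ (j + m))
    * qBinom_mul_qBinom hq hjm

lemma sum_qBinom_mul_qpn_comm (n : ℕ) (x c d : ℂ) :
    ∑ k ∈ range (n + 1), qBinom q n k * qpn q (c * x) k * c ^ (n - k) * d ^ k
      = ∑ k ∈ range (n + 1), qBinom q n k * qpn q (d * x) k * d ^ (n - k) * c ^ k := by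
  simp only [sum_qBinom_mul_qpn_eq hq, mul_comm d c, rogersSzego_comm _ d c]

end GaussianBinomial

section ASCII

variable {q : ℂ} (hq0 : q ≠ 0) (hq : ∀ k, qpn q q k ≠ 0)
include hq0 hq

lemma phi20_div_eq_sum (n : ℕ) (z a : ℂ) :
    phi20 q n z (q ^ n / a) = ∑ k ∈ range (n + 1), qBinom q n k * qpn q z k * a⁻¹ ^ k := by
  refine sum_congr rfl fun k hk => ?_
  have hkn : k ≤ n := Nat.lt_succ_iff.1 (mem_range.1 hk)
  have h := qpn_inv_pow_mul hq0 hkn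
  have := hq k; have := hq (n - k); have := pow_ne_zero (k * (k - 1) / 2) hq0
  rw [neg_pow] at h
  rw [qBinom, if_pos hkn, div_pow, inv_pow]
  generalize qpn q (q ^ n)⁻¹ k = A at h ⊢
  field_simp
  linear_combination (qpn q z k / a ^ k) * h

lemma pow_mul_ASCII_div {c d : ℂ} (hc : c ≠ 0) (hd : d ≠ 0) (n : ℕ) (x : ℂ) :
    d ^ n * ASCII q n (c / d) (c * x) = (-1) ^ n * (q ^ (n * (n - 1) / 2))⁻¹ *
      ∑ k ∈ range (n + 1), qBinom q n k * qpn q (c * x) k * c ^ (n - k) * d ^ k := by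
  simp only [ASCII, phi20_div_eq_sum hq0 hq, mul_sum]
  refine sum_congr rfl fun k hk => ?_
  rw [neg_pow, inv_pow, div_pow, div_pow,
    ← pow_sub_mul_pow c (Nat.lt_succ_iff.1 (mem_range.1 hk))]
  field_simp

end ASCII

/-- `d^n V_n^{(c/d)}(cx;q) = c^n V_n^{(d/c)}(dx;q)`. -/
theorem ASCII_cd_symm (q : ℝ) (hq0 : 0 < q) (hq1 : q < 1) (n : ℕ) (c d x : ℂ)
    (hc : c ≠ 0) (hd : d ≠ 0) :
    d ^ n * ASCII (q : ℂ) n (c / d) (c * x) = c ^ n * ASCII (q : ℂ) n (d / c) (d * x) := by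
  have hq_ne : (q : ℂ) ≠ 0 := Complex.ofReal_ne_zero.2 hq0.ne'
  have hq : ∀ k, qpn (q : ℂ) q k ≠ 0 :=
    qpn_self_ne_zero (by rwa [Complex.norm_real, Real.norm_of_nonneg hq0.le])
  rw [pow_mul_ASCII_div hq_ne hq hc hd, pow_mul_ASCII_div hq_ne hq hd hc,
    sum_qBinom_mul_qpn_comm hq]
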